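/- arXiv:1612.05912 — 4 statements merged into one kernel-verified Lean document; each statement's English description precedes it below -/
import Mathlib

section
/- For odd q, the number of F_{q²}-rational affine points of the curve (X^q+X)(Y^q+Y) = 1 is exactly q²(q-1). -/
/-!
The map `T x = x ^ q + x` is additive, since `x ↦ x ^ q` is a power of Frobenius, and
`T x ^ q = T x` because `x ^ (q ^ 2) = x`. Its kernel and its image are contained in the root sets
of `X ^ q + X` and `X ^ q - X`, so both have at most `q` elements; as their sizes multiply to `q ^ 2`,
both have exactly `q`. Hence the image of `T` is `{y | y ^ q = y}`, which is closed under inversion,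
and every fibre over it has `q` elements. A point of the curve is a `u` with `T u ≠ 0`
(`q ^ 2 - q` choices) together with a `v` in the fibre of `T` over `(T u)⁻¹` (`q` choices).
-/

open Finset Polynomial

theorem card_filter_pow_eq_mul_le {R : Type*} [CommRing R] [IsDomain R] [Fintype R]
    [DecidableEq R] {q : ℕ} (hq : 1 < q) (c : R) :
    #{x : R | x ^ q = c * x} ≤ q := by
  have hP : (X ^ q - C c * X : R[X]) ≠ 0 := by
    intro h
    simpa [coeff_X, hq.ne] using congr_arg (coeff · q) h
  calc #{x : R | x ^ q = c * x} ≤ (X ^ q - C c * X : R[X]).natDegree := by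
        refine card_le_degree_of_subset_roots fun x hx => ?_
        simp_all [mem_roots hP, sub_eq_zero]
    _ ≤ q := (max_self q).le.trans' <| natDegree_sub_le_of_le (natDegree_X_pow_le q)
          ((natDegree_C_mul_le c X).trans (natDegree_X_le.trans hq.le))

theorem card_filter_pow_eq_self_le {R : Type*} [CommRing R] [IsDomain R] [Fintype R]
    [DecidableEq R] {q : ℕ} (hq : 1 < q) : #{x : R | x ^ q = x} ≤ q := by
  simpa using card_filter_pow_eq_mul_le hq (1 : R)

theorem one_lt_of_card_eq_sq {α : Type*} [Fintype α] [Nontrivial α] {q : ℕ}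
    (h : Fintype.card α = q ^ 2) : 1 < q := by
  have := h ▸ Fintype.one_lt_card (α := α)
  nlinarith

namespace AddMonoidHom

variable {G : Type*} [AddGroup G] [Fintype G]

theorem card_eq_card_image_mul_card_ker {M : Type*} [AddMonoid M] [DecidableEq M] (f : G →+ M) :
    Fintype.card G = #(univ.image f) * #{g | f g = 0} := by
  rw [← card_univ, card_eq_sum_card_image f univ, ← smul_eq_mul, ← sum_const]
  refine sum_congr rfl fun y hy => ?_
  obtain ⟨x, -, rfl⟩ := mem_image.1 hy
  exact card_fiber_eq_of_mem_range f ⟨x, rfl⟩ ⟨0, map_zero f⟩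

theorem card_mul_eq_one {K : Type*} [DivisionRing K] [DecidableEq K] (f : G →+ K)
    (hf : ∀ y ∈ Set.range f, y⁻¹ ∈ Set.range f) :
    Nat.card {gh : G × G // f gh.1 * f gh.2 = 1} =
      (Fintype.card G - #{g | f g = 0}) * #{g | f g = 0} := by
  have hfiber (g : G) : #{h | f g * f h = 1} = if f g = 0 then 0 else #{h | f h = 0} := by
    split_ifs with hg
    · simp [hg]
    · rw [← card_fiber_eq_of_mem_range f (hf _ ⟨g, rfl⟩) ⟨0, map_zero f⟩]
      simp_rw [mul_eq_one_iff_inv_eq₀ hg, eq_comm]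
  calc Nat.card {gh : G × G // f gh.1 * f gh.2 = 1}
      = ∑ g, #{h | f g * f h = 1} := by
        rw [Nat.card_congr (Equiv.subtypeProdEquivSigmaSubtype fun g h => f g * f h = 1),
          Nat.card_sigma]
        simp [Nat.card_eq_fintype_card, Fintype.card_subtype]
    _ = #{g | f g ≠ 0} * #{g | f g = 0} := by
        simp only [hfiber, sum_ite, sum_const_zero, sum_const, smul_eq_mul, zero_add]
    _ = (Fintype.card G - #{g | f g = 0}) * #{g | f g = 0} := by
        rw [← card_univ, Nat.eq_sub_of_add_eq' (card_filter_add_card_filter_not _)]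

end AddMonoidHom

section FrobeniusAddId

variable (K : Type*) [Field K] (p n : ℕ) [ExpChar K p]

def iterateFrobeniusAddId : K →+ K :=
  (iterateFrobenius K p n).toAddMonoidHom + AddMonoidHom.id K

variable {K p n}

@[simp]
theorem iterateFrobeniusAddId_apply (x : K) : iterateFrobeniusAddId K p n x = x ^ p ^ n + x :=
  rfl

variable [Fintype K]

theorem iterateFrobeniusAddId_pow (hK : Fintype.card K = (p ^ n) ^ 2) (x : K) :
    iterateFrobeniusAddId K p n x ^ p ^ n = iterateFrobeniusAddId K p n x := by
  rw [iterateFrobeniusAddId_apply, add_pow_expChar_pow, ← pow_mul, ← sq, ← hK,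
    FiniteField.pow_card, add_comm]

variable [DecidableEq K]

theorem image_iterateFrobeniusAddId_subset (hK : Fintype.card K = (p ^ n) ^ 2) :
    univ.image (iterateFrobeniusAddId K p n) ⊆ ({y | y ^ p ^ n = y} : Finset K) := by
  intro y hy
  obtain ⟨x, -, rfl⟩ := mem_image.1 hy
  simpa using iterateFrobeniusAddId_pow hK x

theorem card_ker_iterateFrobeniusAddId_le (hK : Fintype.card K = (p ^ n) ^ 2) :
    #{x | iterateFrobeniusAddId K p n x = 0} ≤ p ^ n := by
  refine le_of_eq_of_le ?_ (card_filter_pow_eq_mul_le (one_lt_of_card_eq_sq hK) (-1 : K))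
  congr 1
  ext x
  simp [add_eq_zero_iff_eq_neg]

theorem card_ker_iterateFrobeniusAddId (hK : Fintype.card K = (p ^ n) ^ 2) :
    #{x | iterateFrobeniusAddId K p n x = 0} = p ^ n := by
  have := (iterateFrobeniusAddId K p n).card_eq_card_image_mul_card_ker
  have := (card_le_card (image_iterateFrobeniusAddId_subset hK)).trans
    (card_filter_pow_eq_self_le (one_lt_of_card_eq_sq hK))
  have := card_ker_iterateFrobeniusAddId_le hK
  nlinarith

theorem image_iterateFrobeniusAddId (hK : Fintype.card K = (p ^ n) ^ 2) :
    univ.image (iterateFrobeniusAddId K p n) = ({y | y ^ p ^ n = y} : Finset K) := by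
  have hcard := (iterateFrobeniusAddId K p n).card_eq_card_image_mul_card_ker
  rw [card_ker_iterateFrobeniusAddId hK, hK, sq] at hcard
  refine eq_of_subset_of_card_le (image_iterateFrobeniusAddId_subset hK) ?_
  rw [← Nat.eq_of_mul_eq_mul_right (one_lt_of_card_eq_sq hK).le hcard]
  exact card_filter_pow_eq_self_le (one_lt_of_card_eq_sq hK)

theorem mem_range_iterateFrobeniusAddId_iff (hK : Fintype.card K = (p ^ n) ^ 2) {y : K} :
    y ∈ Set.range (iterateFrobeniusAddId K p n) ↔ y ^ p ^ n = y := by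
  simpa using congrArg (y ∈ ·) (image_iterateFrobeniusAddId hK)

end FrobeniusAddId

theorem stmt_7_general (p : ℕ) [Fact p.Prime] (n : ℕ) (q : ℕ) (hq : q = p ^ n)
    (F : Type*) [Field F] [Fintype F] (hF : Fintype.card F = q ^ 2) :
    Nat.card {uv : F × F // (uv.1 ^ q + uv.1) * (uv.2 ^ q + uv.2) = 1}
      = q ^ 2 * (q - 1) := by
  classical
  subst hq
  have : CharP F p := charP_of_card_eq_prime_pow (hF.trans (pow_mul p n 2).symm)
  have : ExpChar F p := ExpChar.prime Fact.out
  have hcount := (iterateFrobeniusAddId F p n).card_mul_eq_one fun y hy => by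
    rw [mem_range_iterateFrobeniusAddId_iff hF] at hy ⊢
    rw [inv_pow, hy]
  rw [hF, card_ker_iterateFrobeniusAddId hF] at hcount
  simp only [iterateFrobeniusAddId_apply] at hcount
  rw [hcount, sq, ← Nat.mul_sub_one]
  ring

/-- For odd `q`, the curve `(X^q+X)(Y^q+Y)=1` has exactly `q²(q-1)` affine
`F_{q²}`-rational points. -/
theorem stmt_7 (p : ℕ) [Fact p.Prime] (n : ℕ) (hn : 1 ≤ n) (q : ℕ) (hq : q = p ^ n)
    (hodd : Odd q) (F : Type*) [Field F] [Fintype F] (hF : Fintype.card F = q ^ 2) :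
    Nat.card {uv : F × F // (uv.1 ^ q + uv.1) * (uv.2 ^ q + uv.2) = 1}
      = q ^ 2 * (q - 1) :=
  stmt_7_general p n q hq F hF
end

section
/- The group of maps {(X,Y) ↦ (vX+α, v^{-1}Y+β) : Tr(α)=Tr(β)=0, v^(q-1)=1} acts sharply transitively on the set of F_{q²}-rational affine points of the curve (X^q+X)(Y^q+Y) = 1; in particular the stabilizer of any affine F_{q²}-rational point in this group is trivial. -/
/-!
Only the involution `σ x = x^q` of `F_{q²}` matters: `Tr x = σ x + x`, and `v^(q-1) = 1` says
`v ≠ 0 ∧ σ v = v`. A map `(x, y) ↦ (vx + α, v⁻¹y + β)` of the group multiplies `Tr x` by `v`,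
since `Tr` is linear over the fixed field of `σ` and kills `α`. So a map sending `(u₁, v₁)` to
`(u₂, v₂)` must have `v = Tr u₂ / Tr u₁`, which then determines `α` and `β`. Conversely these
values work: as `Tr u · Tr v = 1` on the curve, `Tr u₂ = v Tr u₁` forces `Tr v₂ = v⁻¹ Tr v₁`.
-/

namespace TraceCurve

variable {F : Type*} [Field F] (σ : F →+* F)

def tr (x : F) : F := σ x + x

variable {σ}

lemma tr_add (x y : F) : tr σ (x + y) = tr σ x + tr σ y := by
  simp only [tr, map_add]; ring

lemma tr_mul_of_fixed {c : F} (hc : σ c = c) (x : F) : tr σ (c * x) = c * tr σ x := by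
  simp only [tr, map_mul, hc]; ring

lemma tr_fixed (hσ : Function.Involutive σ) (x : F) : σ (tr σ x) = tr σ x := by
  rw [tr, map_add, hσ x, add_comm]

lemma tr_sub_mul_of_fixed {c : F} (hc : σ c = c) (y x : F) :
    tr σ (y - c * x) = tr σ y - c * tr σ x := by
  simp only [tr, map_sub, map_mul, hc]; ring

theorem existsUnique_map_of_tr_mul_tr_eq_one (hσ : Function.Involutive σ) {u₁ v₁ u₂ v₂ : F}
    (h₁ : tr σ u₁ * tr σ v₁ = 1) (h₂ : tr σ u₂ * tr σ v₂ = 1) :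
    ∃! g : F × F × F,
      (tr σ g.1 = 0 ∧ tr σ g.2.1 = 0 ∧ g.2.2 ≠ 0 ∧ σ g.2.2 = g.2.2) ∧
      g.2.2 * u₁ + g.1 = u₂ ∧ g.2.2⁻¹ * v₁ + g.2.1 = v₂ := by
  have ht₁ : tr σ u₁ ≠ 0 := left_ne_zero_of_mul_eq_one h₁
  obtain ⟨v, hv⟩ : ∃ v, v * tr σ u₁ = tr σ u₂ := ⟨_, div_mul_cancel₀ _ ht₁⟩
  have hv0 : v ≠ 0 := left_ne_zero_of_mul (hv ▸ left_ne_zero_of_mul_eq_one h₂)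
  have hvσ : σ v = v := by
    refine mul_right_cancel₀ ht₁ ?_
    rw [← tr_fixed hσ u₁, ← map_mul, hv, tr_fixed hσ, ← hv, tr_fixed hσ]
  have hvs : v * tr σ v₂ = tr σ v₁ :=
    mul_left_cancel₀ ht₁ (by linear_combination tr σ v₂ * hv + h₂ - h₁)
  refine ⟨(u₂ - v * u₁, v₂ - v⁻¹ * v₁, v), ⟨⟨?_, ?_, hv0, hvσ⟩, by ring, by ring⟩, ?_⟩
  · rw [tr_sub_mul_of_fixed hvσ, hv, sub_self]
  · rw [tr_sub_mul_of_fixed (by rw [map_inv₀, hvσ]), ← hvs, inv_mul_cancel_left₀ hv0, sub_self]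
  · rintro ⟨α, β, w⟩ ⟨⟨hα, -, -, hwσ⟩, hu, hv'⟩
    have hwv : w = v := by
      refine mul_right_cancel₀ ht₁ ?_
      rw [hv, ← hu, tr_add, tr_mul_of_fixed hwσ, hα, add_zero]
    subst hwv hu hv'
    simp

end TraceCurve

lemma pow_pred_eq_one_iff {M : Type*} [GroupWithZero M] {q : ℕ} (hq : 2 ≤ q) (v : M) :
    v ^ (q - 1) = 1 ↔ v ≠ 0 ∧ v ^ q = v := by
  have hsucc : v ^ q = v ^ (q - 1) * v := by rw [← pow_succ, Nat.sub_add_cancel (by omega)]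
  constructor
  · intro h
    refine ⟨fun hv ↦ ?_, by rw [hsucc, h, one_mul]⟩
    rw [hv, zero_pow (by omega)] at h
    exact zero_ne_one h
  · rintro ⟨hv, hvq⟩
    exact mul_right_cancel₀ hv (by rw [← hsucc, hvq, one_mul])

lemma pow_pow_eq_self_of_card_eq_sq {K : Type*} [GroupWithZero K] [Fintype K] {q : ℕ}
    (hK : Fintype.card K = q ^ 2) (x : K) : (x ^ q) ^ q = x := by
  rw [← pow_mul, ← sq, ← hK, FiniteField.pow_card]

theorem stmt_10_general (p : ℕ) [Fact p.Prime] (n : ℕ) (q : ℕ) (hq : q = p ^ n)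
    (F : Type*) [Field F] [Fintype F] (hF : Fintype.card F = q ^ 2)
    (u₁ v₁ u₂ v₂ : F)
    (h₁ : (u₁ ^ q + u₁) * (v₁ ^ q + v₁) = 1)
    (h₂ : (u₂ ^ q + u₂) * (v₂ ^ q + v₂) = 1) :
    ∃! g : F × F × F,
      (g.1 ^ q + g.1 = 0 ∧ g.2.1 ^ q + g.2.1 = 0 ∧ g.2.2 ^ (q - 1) = 1) ∧
      g.2.2 * u₁ + g.1 = u₂ ∧ g.2.2⁻¹ * v₁ + g.2.1 = v₂ := by
  subst hq
  have : CharP F p := charP_of_card_eq_prime_pow (f := n * 2) (by rw [hF, pow_mul])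
  have hq2 : 2 ≤ p ^ n := (Nat.one_lt_pow_iff two_ne_zero).mp (hF ▸ Fintype.one_lt_card)
  have hfrob : ∀ x : F, iterateFrobenius F p n x = x ^ p ^ n := iterateFrobenius_def p n
  have htr : ∀ x : F, x ^ p ^ n + x = TraceCurve.tr (iterateFrobenius F p n) x := fun x ↦ by
    rw [TraceCurve.tr, hfrob]
  have hinv : Function.Involutive (iterateFrobenius F p n) := fun x ↦ by
    rw [hfrob, hfrob, pow_pow_eq_self_of_card_eq_sq hF]
  rw [htr, htr] at h₁ h₂
  refine (existsUnique_congr fun g ↦ ?_).mpr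
    (TraceCurve.existsUnique_map_of_tr_mul_tr_eq_one hinv h₁ h₂)
  rw [htr, htr, pow_pred_eq_one_iff hq2, hfrob]

/-- The group of maps `(x,y) ↦ (vx+α, v⁻¹y+β)` with `Tr α = Tr β = 0`, `v^(q-1) = 1`
acts sharply transitively on the affine `F_{q²}`-rational points of
`(X^q+X)(Y^q+Y) = 1`: for any two such points there is a unique such map taking the
first to the second; in particular point stabilizers are trivial. -/
theorem stmt_10 (p : ℕ) [Fact p.Prime] (n : ℕ) (hn : 1 ≤ n) (q : ℕ) (hq : q = p ^ n)
    (F : Type*) [Field F] [Fintype F] (hF : Fintype.card F = q ^ 2)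
    (u₁ v₁ u₂ v₂ : F)
    (h₁ : (u₁ ^ q + u₁) * (v₁ ^ q + v₁) = 1)
    (h₂ : (u₂ ^ q + u₂) * (v₂ ^ q + v₂) = 1) :
    ∃! g : F × F × F,
      (g.1 ^ q + g.1 = 0 ∧ g.2.1 ^ q + g.2.1 = 0 ∧ g.2.2 ^ (q - 1) = 1) ∧
      g.2.2 * u₁ + g.1 = u₂ ∧ g.2.2⁻¹ * v₁ + g.2.1 = v₂ :=
  stmt_10_general p n q hq F hF u₁ v₁ u₂ v₂ h₁ h₂
end

section
/- If (u,v) satisfies (u^q+u)(v^q+v) = c with c ≠ 0, and Y = v + v₁t + v₂t² + ⋯ is the power series solution of (X^q+X)(Y^q+Y) = c at X = u + t, then vᵢ = (-1)ⁱ (v^q+v)/(u^q+u)ⁱ for 1 ≤ i ≤ q-1. -/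
/-!
In characteristic `p` the Frobenius `f ↦ f ^ q` is additive, so `(u + t) ^ q + (u + t)` is
`a + t + t ^ q` with `a = u ^ q + u`, and `y ^ q` has no coefficients in degrees `1, …, q - 1`.
Hence `z = y ^ q + y` agrees with `y` in those degrees and `z(0) = v ^ q + v`, while comparing
coefficients in `(a + t + t ^ q) z = c` gives `a z_k + z_{k-1} = 0` for `0 < k < q`.
-/

open PowerSeries

namespace PowerSeries

instance {R : Type*} [CommSemiring R] {p : ℕ} [ExpChar R p] : ExpChar R⟦X⟧ p :=
  expChar_of_injective_ringHom C_injective p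

theorem coeff_pow_expChar_pow_eq_zero {R : Type*} [CommSemiring R] {p : ℕ} [ExpChar R p]
    (n : ℕ) (f : R⟦X⟧) {k : ℕ} (hk0 : 0 < k) (hk : k < p ^ n) :
    coeff k (f ^ p ^ n) = 0 := by
  rw [eq_X_mul_shift_add_const f, add_pow_expChar_pow, mul_pow, ← map_pow, map_add,
    coeff_X_pow_mul', if_neg (by omega), coeff_C, if_neg (by omega), add_zero]

theorem coeff_eq_of_C_add_X_add_X_pow_mul_eq_C {K : Type*} [Field K] {a c : K} (ha : a ≠ 0)
    {q : ℕ} {z : K⟦X⟧} (h : (C a + X + X ^ q) * z = C c) :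
    ∀ k < q, coeff k z = (-1) ^ k * coeff 0 z / a ^ k := by
  intro k
  induction k with
  | zero => simp
  | succ k ih =>
    intro hk
    have hrec : a * coeff (k + 1) z + coeff k z = 0 := by
      simpa [add_mul, coeff_C_mul, coeff_succ_X_mul, coeff_X_pow_mul', coeff_C,
        show ¬ q ≤ k + 1 by omega] using congrArg (coeff (k + 1)) h
    rw [ih (by omega)] at hrec
    field_simp at hrec ⊢
    linear_combination hrec

end PowerSeries

theorem stmt_11_general (K : Type*) [Field K] (p : ℕ) [Fact p.Prime] [CharP K p]
    (n : ℕ) (q : ℕ) (hq : q = p ^ n) (c : K)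
    (u v : K) (hu : u ^ q + u ≠ 0)
    (y : PowerSeries K) (hy0 : PowerSeries.coeff 0 y = v)
    (hy : ((PowerSeries.C u + PowerSeries.X) ^ q + (PowerSeries.C u + PowerSeries.X)) *
        (y ^ q + y) = PowerSeries.C c) :
    ∀ i : ℕ, 1 ≤ i → i ≤ q - 1 →
      PowerSeries.coeff i y = (-1) ^ i * (v ^ q + v) / (u ^ q + u) ^ i := by
  subst hq
  have hfrob : (C u + X) ^ p ^ n + (C u + X) = C (u ^ p ^ n + u) + X + X ^ p ^ n := by
    rw [add_pow_expChar_pow, map_add, map_pow]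
    ring
  rw [hfrob] at hy
  intro i hi1 hiq
  have hz0 : coeff 0 (y ^ p ^ n + y) = v ^ p ^ n + v := by simp [← hy0]
  rw [← hz0, ← coeff_eq_of_C_add_X_add_X_pow_mul_eq_C hu hy i (by omega), map_add,
    coeff_pow_expChar_pow_eq_zero n y (by omega) (by omega), zero_add]

/-- If `y(t) = v + Σ vᵢ tⁱ` is the power series solution of `(X^q+X)(Y^q+Y) = c` at
`X = u + t`, then `vᵢ = (-1)ⁱ (v^q+v)/(u^q+u)ⁱ` for `1 ≤ i ≤ q-1`. -/
theorem stmt_11 (K : Type*) [Field K] [IsAlgClosed K] (p : ℕ) [Fact p.Prime] [CharP K p]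
    (n : ℕ) (hn : 1 ≤ n) (q : ℕ) (hq : q = p ^ n) (c : K) (hc : c ≠ 0)
    (u v : K) (huv : (u ^ q + u) * (v ^ q + v) = c) (hu : u ^ q + u ≠ 0)
    (y : PowerSeries K) (hy0 : PowerSeries.coeff 0 y = v)
    (hy : ((PowerSeries.C u + PowerSeries.X) ^ q + (PowerSeries.C u + PowerSeries.X)) *
        (y ^ q + y) = PowerSeries.C c) :
    ∀ i : ℕ, 1 ≤ i → i ≤ q - 1 →
      PowerSeries.coeff i y = (-1) ^ i * (v ^ q + v) / (u ^ q + u) ^ i :=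
  stmt_11_general K p n q hq c u v hu y hy0 hy
end

section
/- The imaginary hyperosculating conic condition: for a point (u,v) on the curve (X^q+X)(Y^q+Y) = c with u^q+u ≠ 0, the condition (v + v₁u)^q + v₁^q·u + v = 0 (where v₁ = -c/(u^q+u)²) is equivalent to c^{-1}(u^q+u)² ∈ F_q. -/
/-!
Writing `s = u^q + u` and using that `x ↦ x^q` is a ring endomorphism, the left-hand side
equals `(v^q + v) + v₁^q s`. On the curve `v^q + v = c / s`, and `-v₁ = c / s² = x⁻¹` for
`x = c⁻¹ s²`, so the left-hand side is `(x⁻¹ - (x⁻¹)^q) s`. It vanishes iff `x⁻¹`, equivalently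
`x`, is fixed by Frobenius.
-/

section RingHomField

variable {K : Type*} [Field K] (φ : K →+* K)

theorem RingHom.map_add_mul_add_add (u v t : K) :
    φ (v + t * u) + φ t * u + v = (φ v + v) + φ t * (φ u + u) := by
  simp only [map_add, map_mul]
  ring

variable {φ}

theorem hyperosculating_iff_map_fixed {c u v : K} (huv : (φ u + u) * (φ v + v) = c)
    (hu : φ u + u ≠ 0) :
    φ (v + -(c / (φ u + u) ^ 2) * u) + φ (-(c / (φ u + u) ^ 2)) * u + v = 0 ↔
      φ (c⁻¹ * (φ u + u) ^ 2) = c⁻¹ * (φ u + u) ^ 2 := by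
  set s := φ u + u
  have hv : φ v + v = c / s := by rw [eq_div_iff hu, ← huv, mul_comm]
  have hc : c / s ^ 2 = (c⁻¹ * s ^ 2)⁻¹ := by rw [mul_inv, inv_inv, div_eq_mul_inv]
  have key : φ (v + -(c / s ^ 2) * u) + φ (-(c / s ^ 2)) * u + v
      = (c / s ^ 2 - φ (c / s ^ 2)) * s := by
    rw [φ.map_add_mul_add_add, hv, map_neg]
    field_simp
    ring
  rw [key, mul_eq_zero_iff_right hu, sub_eq_zero, hc, eq_comm, map_inv₀, inv_inj]

end RingHomField

theorem stmt_18_general (K : Type*) [Field K] (p : ℕ) [Fact p.Prime] [CharP K p]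
    (n : ℕ) (q : ℕ) (hq : q = p ^ n) (c : K)
    (u v : K) (huv : (u ^ q + u) * (v ^ q + v) = c) (hu : u ^ q + u ≠ 0)
    (v₁ : K) (hv₁ : v₁ = -(c / (u ^ q + u) ^ 2)) :
    ((v + v₁ * u) ^ q + v₁ ^ q * u + v = 0) ↔
      (c⁻¹ * (u ^ q + u) ^ 2) ^ q = c⁻¹ * (u ^ q + u) ^ 2 := by
  subst hq hv₁
  exact hyperosculating_iff_map_fixed (φ := iterateFrobenius K p n) huv hu

/-- For `(u,v)` on the curve with `u^q+u ≠ 0` and `v₁ = -c/(u^q+u)²`, the condition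
`(v + v₁u)^q + v₁^q u + v = 0` is equivalent to `c⁻¹(u^q+u)² ∈ F_q`. -/
theorem stmt_18 (K : Type*) [Field K] [IsAlgClosed K] (p : ℕ) [Fact p.Prime] [CharP K p]
    (n : ℕ) (hn : 1 ≤ n) (q : ℕ) (hq : q = p ^ n) (c : K) (hc : c ≠ 0)
    (u v : K) (huv : (u ^ q + u) * (v ^ q + v) = c) (hu : u ^ q + u ≠ 0)
    (v₁ : K) (hv₁ : v₁ = -(c / (u ^ q + u) ^ 2)) :
    ((v + v₁ * u) ^ q + v₁ ^ q * u + v = 0) ↔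
      (c⁻¹ * (u ^ q + u) ^ 2) ^ q = c⁻¹ * (u ^ q + u) ^ 2 :=
  stmt_18_general K p n q hq c u v huv hu v₁ hv₁
end
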